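/- Let f : Ω₁ → Ω₂ be a proper holomorphic map of degree m between bounded domains in ℂⁿ with complex Jacobian u, local inverses g₁,…,g_m with Jacobians u₁,…,u_m defined locally on Ω₂ \ f(E). If ψ ∈ L²(Ω₁), then the symmetrized function Σ_{k=1}^m u_k·(ψ∘g_k), defined almost everywhere on Ω₂, lies in L²(Ω₂), with ‖Σ_k u_k·(ψ∘g_k)‖²_{L²(Ω₂)} ≤ m·‖ψ‖²_{L²(Ω₁)}. -/

import Mathlib

/-!
Off the null set `f(E)`, the local inverses `g_k` carve out pairwise disjoint sheets
`B_k = g_k(Ω₂ \ f(E)) ⊆ Ω₁`, each mapped injectively onto `Ω₂ \ f(E)` by `f`. The Cauchy–Schwarz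
bound `|Σ_k a_k|² ≤ m Σ_k |a_k|²` reduces the claim to one sheet at a time, and there the real
change of variables `w = f z`, whose Jacobian is `|u|²`, turns `∫ |u_k · ψ ∘ g_k|²` over
`Ω₂ \ f(E)` into `∫_{B_k} |ψ|²`. Summing over the disjoint sheets gives at most `m ∫_{Ω₁} |ψ|²`.
-/

open MeasureTheory

/-- Partial derivative `∂/∂z_j` of a function of several complex variables. -/
noncomputable def pderivC {n : ℕ} (j : Fin n) (f : (Fin n → ℂ) → ℂ) :
    (Fin n → ℂ) → ℂ :=
  fun z => deriv (fun w => f (Function.update z j w)) (z j)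

/-- The complex Jacobian determinant `u = det [∂f_i/∂z_j]` of a holomorphic map. -/
noncomputable def jacDet {n : ℕ} (f : (Fin n → ℂ) → (Fin n → ℂ)) (z : Fin n → ℂ) : ℂ :=
  (Matrix.of fun i j : Fin n => pderivC j (fun w => f w i) z).det

open Set Function
open scoped ENNReal NNReal

section JacobianDeterminant

variable {n : ℕ} {f : (Fin n → ℂ) → (Fin n → ℂ)} {z : Fin n → ℂ}

theorem pderivC_apply_eq_fderiv (hf : DifferentiableAt ℂ f z) (i j : Fin n) :
    pderivC j (fun w => f w i) z = fderiv ℂ f z (Pi.single j 1) i := by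
  have hf' : HasFDerivAt f (fderiv ℂ f z) (update z j (z j)) := by
    rw [update_eq_self]; exact hf.hasFDerivAt
  exact (hasDerivAt_pi.mp (hf'.comp_hasDerivAt _ (hasDerivAt_update z j (z j))) i).deriv

theorem jacDet_eq_det_fderiv (hf : DifferentiableAt ℂ f z) :
    jacDet f z = (fderiv ℂ f z).det := by
  rw [ContinuousLinearMap.det, ← LinearMap.det_toMatrix', jacDet]
  congr 1
  ext i j
  exact pderivC_apply_eq_fderiv hf i j

end JacobianDeterminant

theorem enorm_sum_sq_le_card_mul {ι ε : Type*} [Fintype ι] [TopologicalSpace ε]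
    [ESeminormedAddCommMonoid ε] (a : ι → ε) :
    ‖∑ k, a k‖ₑ ^ 2 ≤ (Fintype.card ι : ℝ≥0∞) * ∑ k, ‖a k‖ₑ ^ 2 := by
  calc ‖∑ k, a k‖ₑ ^ 2 ≤ (∑ k, ‖a k‖ₑ : ℝ≥0∞) ^ 2 := by gcongr; exact enorm_sum_le _ a
    _ ≤ _ := by
      simpa [ENNReal.rpow_two, show (2 : ℝ) - 1 = 1 by norm_num] using
        ENNReal.rpow_sum_le_const_mul_sum_rpow (s := Finset.univ) (p := 2)
          (f := fun k => ‖a k‖ₑ) one_le_two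

theorem enorm_sq_mul_enorm_inv_mul_sq_le {𝕜 : Type*} [NormedDivisionRing 𝕜] (u x : 𝕜) :
    ‖u‖ₑ ^ 2 * ‖u⁻¹ * x‖ₑ ^ 2 ≤ ‖x‖ₑ ^ 2 := by
  rw [← mul_pow, ← enorm_mul]
  rcases eq_or_ne u 0 with rfl | hu
  · simp
  · rw [mul_inv_cancel_left₀ hu]

theorem ContinuousOn.measurableSet_sep_leftInverse {E : Type*} [TopologicalSpace E]
    [MeasurableSpace E] [BorelSpace E] [MeasurableEq E] {Ω S : Set E} {f g : E → E}
    (hf : ContinuousOn f Ω) (hΩ : MeasurableSet Ω) (hS : MeasurableSet S) (hg : Measurable g) :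
    MeasurableSet {z ∈ Ω | f z ∈ S ∧ g (f z) = z} := by
  classical
  have hφ : Measurable (Ω.piecewise f id) :=
    hf.measurable_piecewise continuous_id.continuousOn hΩ
  convert hΩ.inter ((hφ hS).inter (measurableSet_eq_fun (hg.comp hφ) measurable_id)) using 1
  ext z
  refine and_congr_right fun hz => ?_
  simp [piecewise_eq_of_mem Ω f id hz]

section ChangeOfVariables

variable {E : Type*} [NormedAddCommGroup E] [NormedSpace ℝ E] [FiniteDimensional ℝ E]
  [MeasurableSpace E] [BorelSpace E] (μ : Measure E) [μ.IsAddHaarMeasure]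
  {f : E → E} {f' : E → E →L[ℝ] E} {u ψ : E → ℂ}

theorem lintegral_image_enorm_inv_mul_comp_sq_le {s : Set E} {g : E → E} (hs : MeasurableSet s)
    (hf' : ∀ z ∈ s, HasFDerivWithinAt f (f' z) s z) (hgf : LeftInvOn g f s)
    (hdet : ∀ z ∈ s, |(f' z).det| = ‖u z‖ ^ 2) :
    ∫⁻ w in f '' s, ‖(u (g w))⁻¹ * ψ (g w)‖ₑ ^ 2 ∂μ ≤ ∫⁻ z in s, ‖ψ z‖ₑ ^ 2 ∂μ := by
  rw [lintegral_image_eq_lintegral_abs_det_fderiv_mul μ hs hf' hgf.injOn]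
  refine setLIntegral_mono' hs fun z hz => ?_
  rw [hgf hz, hdet z hz, ENNReal.ofReal_pow (norm_nonneg _), ofReal_norm]
  exact enorm_sq_mul_enorm_inv_mul_sq_le _ _

theorem lintegral_enorm_sum_inv_mul_comp_sq_le {ι : Type*} [Fintype ι] {Ω S : Set E}
    {g : ι → E → E} (hΩ : MeasurableSet Ω) (hS : MeasurableSet S)
    (hf' : ∀ z ∈ Ω, HasFDerivAt f (f' z) z) (hdet : ∀ z ∈ Ω, |(f' z).det| = ‖u z‖ ^ 2)
    (hum : Measurable u) (hψm : Measurable ψ) (hgm : ∀ k, Measurable (g k))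
    (hg : ∀ w ∈ S, (∀ k, g k w ∈ Ω ∧ f (g k w) = w) ∧ Injective fun k => g k w) :
    ∫⁻ w in S, ‖∑ k, (u (g k w))⁻¹ * ψ (g k w)‖ₑ ^ 2 ∂μ
      ≤ Fintype.card ι * ∫⁻ z in Ω, ‖ψ z‖ₑ ^ 2 ∂μ := by
  set B : ι → Set E := fun k => {z ∈ Ω | f z ∈ S ∧ g k (f z) = z}
  have hBm (k : ι) : MeasurableSet (B k) :=
    (continuousOn_of_forall_continuousAt fun z hz => (hf' z hz).continuousAt
      ).measurableSet_sep_leftInverse hΩ hS (hgm k)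
  have hfB (k : ι) : f '' B k = S := by
    refine Subset.antisymm (image_subset_iff.2 fun z hz => hz.2.1) fun w hw => ?_
    obtain ⟨hgΩ, hfg⟩ := (hg w hw).1 k
    exact ⟨g k w, ⟨hgΩ, by rwa [hfg], by rw [hfg]⟩, hfg⟩
  have hBdisj : Pairwise (Disjoint on B) := fun k j hkj =>
    disjoint_left.2 fun z hzk hzj =>
      hkj ((hg _ hzk.2.1).2 (hzk.2.2.trans hzj.2.2.symm))
  have hsheet (k : ι) :
      ∫⁻ w in S, ‖(u (g k w))⁻¹ * ψ (g k w)‖ₑ ^ 2 ∂μ ≤ ∫⁻ z in B k, ‖ψ z‖ₑ ^ 2 ∂μ := by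
    rw [← hfB k]
    exact lintegral_image_enorm_inv_mul_comp_sq_le μ (hBm k)
      (fun z hz => (hf' z hz.1).hasFDerivWithinAt) (fun z hz => hz.2.2)
      (fun z hz => hdet z hz.1)
  calc ∫⁻ w in S, ‖∑ k, (u (g k w))⁻¹ * ψ (g k w)‖ₑ ^ 2 ∂μ
      ≤ ∫⁻ w in S, Fintype.card ι * ∑ k, ‖(u (g k w))⁻¹ * ψ (g k w)‖ₑ ^ 2 ∂μ :=
        lintegral_mono fun w => enorm_sum_sq_le_card_mul _
    _ = Fintype.card ι * ∑ k, ∫⁻ w in S, ‖(u (g k w))⁻¹ * ψ (g k w)‖ₑ ^ 2 ∂μ := by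
        rw [lintegral_const_mul' _ _ (ENNReal.natCast_ne_top _), lintegral_finsetSum]
        exact fun k _ => ((((hum.comp (hgm k)).inv.mul (hψm.comp (hgm k))).enorm).pow_const 2)
    _ ≤ Fintype.card ι * ∑ k, ∫⁻ z in B k, ‖ψ z‖ₑ ^ 2 ∂μ := by
        gcongr _ * ?_
        exact Finset.sum_le_sum fun k _ => hsheet k
    _ = Fintype.card ι * ∫⁻ z in ⋃ k, B k, ‖ψ z‖ₑ ^ 2 ∂μ := by
        rw [lintegral_iUnion hBm hBdisj, tsum_fintype]
    _ ≤ Fintype.card ι * ∫⁻ z in Ω, ‖ψ z‖ₑ ^ 2 ∂μ := by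
        gcongr
        exact iUnion_subset fun k => sep_subset _ _

end ChangeOfVariables

section L2

variable {α β F G : Type*} [MeasurableSpace α] [MeasurableSpace β] {μ : Measure α}
  {ν : Measure β} [NormedAddCommGroup F] [NormedAddCommGroup G] {φ : α → F} {ψ : β → G}

theorem memLp_two_iff_lintegral_enorm_sq_lt_top (hφ : AEStronglyMeasurable φ μ) :
    MemLp φ 2 μ ↔ ∫⁻ x, ‖φ x‖ₑ ^ 2 ∂μ < ⊤ := by
  rw [MemLp, eLpNorm_lt_top_iff_lintegral_rpow_enorm_lt_top two_ne_zero ENNReal.ofNat_ne_top]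
  simp [hφ]

theorem integral_norm_sq_eq_toReal_lintegral (hφ : AEStronglyMeasurable φ μ) :
    ∫ x, ‖φ x‖ ^ 2 ∂μ = (∫⁻ x, ‖φ x‖ₑ ^ 2 ∂μ).toReal := by
  rw [integral_eq_lintegral_of_nonneg_ae (f := fun x => ‖φ x‖ ^ 2)
    (ae_of_all _ fun x => by positivity) (hφ.norm.pow 2)]
  simp_rw [ENNReal.ofReal_pow (norm_nonneg _), ofReal_norm]

theorem memLp_two_and_integral_norm_sq_le_of_lintegral_le (hφ : AEStronglyMeasurable φ μ)
    (hψ : MemLp ψ 2 ν) {c : ℝ≥0}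
    (h : ∫⁻ x, ‖φ x‖ₑ ^ 2 ∂μ ≤ c * ∫⁻ y, ‖ψ y‖ₑ ^ 2 ∂ν) :
    MemLp φ 2 μ ∧ ∫ x, ‖φ x‖ ^ 2 ∂μ ≤ c * ∫ y, ‖ψ y‖ ^ 2 ∂ν := by
  have hψfin := (memLp_two_iff_lintegral_enorm_sq_lt_top hψ.1).1 hψ
  have hfin : (c : ℝ≥0∞) * ∫⁻ y, ‖ψ y‖ₑ ^ 2 ∂ν ≠ ⊤ :=
    ENNReal.mul_ne_top ENNReal.coe_ne_top hψfin.ne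
  refine ⟨(memLp_two_iff_lintegral_enorm_sq_lt_top hφ).2 (h.trans_lt hfin.lt_top), ?_⟩
  rw [integral_norm_sq_eq_toReal_lintegral hφ, integral_norm_sq_eq_toReal_lintegral hψ.1]
  simpa [ENNReal.toReal_mul] using ENNReal.toReal_mono hfin h

end L2

theorem proper_map_symmetrization_L2_general
    {n m : ℕ} (Ω₁ Ω₂ : Set (Fin n → ℂ))
    (hΩ₁o : IsOpen Ω₁)
    (hΩ₂o : IsOpen Ω₂)
    (f : (Fin n → ℂ) → (Fin n → ℂ))
    (hf : DifferentiableOn ℂ f Ω₁)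
    (E : Set (Fin n → ℂ))
    (hfE0 : volume (f '' E) = 0)
    (hjac : ∀ z ∈ Ω₁, LinearMap.det ((fderiv ℝ f z).toLinearMap) = ‖jacDet f z‖ ^ 2)
    -- a measurable global choice of the `m` local inverses of `f` on `Ω₂ \ f(E)`
    (g : Fin m → (Fin n → ℂ) → (Fin n → ℂ)) (hgm : ∀ k, Measurable (g k))
    (hg : ∀ w ∈ Ω₂ \ f '' E,
      (∀ k, g k w ∈ Ω₁ \ E ∧ f (g k w) = w) ∧ Function.Injective fun k => g k w)
    (ψ : (Fin n → ℂ) → ℂ) (hψm : Measurable ψ)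
    (hψ : MemLp ψ 2 (volume.restrict Ω₁)) :
    MemLp (fun w => ∑ k, (jacDet f (g k w))⁻¹ * ψ (g k w)) 2 (volume.restrict Ω₂) ∧
      ∫ w in Ω₂, ‖∑ k, (jacDet f (g k w))⁻¹ * ψ (g k w)‖ ^ 2
        ≤ m * ∫ z in Ω₁, ‖ψ z‖ ^ 2 := by
  have hdiff (z) (hz : z ∈ Ω₁) : DifferentiableAt ℂ f z := hf.differentiableAt (hΩ₁o.mem_nhds hz)
  -- `jacDet f` is only known to agree with this measurable function on `Ω₁`.
  set u : (Fin n → ℂ) → ℂ := fun z => (fderiv ℂ f z).det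
  have hum : Measurable u :=
    ContinuousLinearMap.continuous_det.measurable.comp (measurable_fderiv ℂ f)
  have hdet (z) (hz : z ∈ Ω₁) : |(fderiv ℝ f z).det| = ‖u z‖ ^ 2 := by
    rw [ContinuousLinearMap.det, hjac z hz, jacDet_eq_det_fderiv (hdiff z hz), abs_sq]
  set S := Ω₂ \ toMeasurable volume (f '' E)
  have hSm : MeasurableSet S := hΩ₂o.measurableSet.diff (measurableSet_toMeasurable _ _)
  have hSΩ₂ : S =ᵐ[volume] Ω₂ := sdiff_null_ae_eq_self (by rwa [measure_toMeasurable])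
  have hgS (w) (hw : w ∈ S) :
      (∀ k, g k w ∈ Ω₁ ∧ f (g k w) = w) ∧ Injective fun k => g k w := by
    obtain ⟨hgk, hinj⟩ := hg w ⟨hw.1, fun h => hw.2 (subset_toMeasurable _ _ h)⟩
    exact ⟨fun k => ⟨(hgk k).1.1, (hgk k).2⟩, hinj⟩
  have hjacS : EqOn (fun w => ∑ k, (jacDet f (g k w))⁻¹ * ψ (g k w))
      (fun w => ∑ k, (u (g k w))⁻¹ * ψ (g k w)) S := fun w hw =>
    Finset.sum_congr rfl fun k _ => by rw [jacDet_eq_det_fderiv (hdiff _ ((hgS w hw).1 k).1)]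
  have hmeas : Measurable fun w => ∑ k, (u (g k w))⁻¹ * ψ (g k w) :=
    Finset.measurable_sum _ fun k _ => (hum.comp (hgm k)).inv.mul (hψm.comp (hgm k))
  have hae := (ae_restrict_congr_set hSΩ₂).1 ((ae_restrict_mem hSm).mono hjacS)
  refine memLp_two_and_integral_norm_sq_le_of_lintegral_le
    (hmeas.aestronglyMeasurable.congr (Filter.EventuallyEq.symm hae)) hψ (c := m) ?_
  calc ∫⁻ w in Ω₂, ‖∑ k, (jacDet f (g k w))⁻¹ * ψ (g k w)‖ₑ ^ 2
      = ∫⁻ w in S, ‖∑ k, (u (g k w))⁻¹ * ψ (g k w)‖ₑ ^ 2 := by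
        rw [← setLIntegral_congr hSΩ₂]
        exact setLIntegral_congr_fun hSm fun w hw => congrArg (‖·‖ₑ ^ 2) (hjacS hw)
    _ ≤ Fintype.card (Fin m) * ∫⁻ z in Ω₁, ‖ψ z‖ₑ ^ 2 :=
        lintegral_enorm_sum_inv_mul_comp_sq_le volume hΩ₁o.measurableSet hSm
          (fun z hz => ((hdiff z hz).restrictScalars ℝ).hasFDerivAt) hdet hum hψm hgm hgS
    _ = _ := by simp

/-- For a proper holomorphic map `f : Ω₁ → Ω₂` of degree `m` with local inverses
`g₁, …, g_m` (with complex Jacobians `u_k = 1/(u ∘ g_k)`), and `ψ ∈ L²(Ω₁)`, the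
symmetrized function `Σ_k u_k·(ψ∘g_k)` lies in `L²(Ω₂)` with
`‖Σ_k u_k·(ψ∘g_k)‖²_{L²(Ω₂)} ≤ m·‖ψ‖²_{L²(Ω₁)}`. -/
theorem proper_map_symmetrization_L2
    {n m : ℕ} (Ω₁ Ω₂ : Set (Fin n → ℂ))
    (hΩ₁o : IsOpen Ω₁) (hΩ₁c : IsConnected Ω₁) (hΩ₁b : Bornology.IsBounded Ω₁)
    (hΩ₂o : IsOpen Ω₂) (hΩ₂c : IsConnected Ω₂) (hΩ₂b : Bornology.IsBounded Ω₂)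
    (f : (Fin n → ℂ) → (Fin n → ℂ))
    (hf : DifferentiableOn ℂ f Ω₁) (hmaps : Set.MapsTo f Ω₁ Ω₂)
    (hproper : ∀ L : Set (Fin n → ℂ), L ⊆ Ω₂ → IsCompact L → IsCompact (Ω₁ ∩ f ⁻¹' L))
    (E : Set (Fin n → ℂ)) (hE : E = {z ∈ Ω₁ | jacDet f z = 0})
    (hE0 : volume E = 0) (hfE0 : volume (f '' E) = 0)
    (hcount : ∀ w ∈ Ω₂ \ f '' E, ((Ω₁ \ E) ∩ f ⁻¹' {w}).ncard = m)
    (honto : f '' (Ω₁ \ E) = Ω₂ \ f '' E)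
    (hjac : ∀ z ∈ Ω₁, LinearMap.det ((fderiv ℝ f z).toLinearMap) = ‖jacDet f z‖ ^ 2)
    -- a measurable global choice of the `m` local inverses of `f` on `Ω₂ \ f(E)`
    (g : Fin m → (Fin n → ℂ) → (Fin n → ℂ)) (hgm : ∀ k, Measurable (g k))
    (hg : ∀ w ∈ Ω₂ \ f '' E,
      (∀ k, g k w ∈ Ω₁ \ E ∧ f (g k w) = w) ∧ Function.Injective fun k => g k w)
    (ψ : (Fin n → ℂ) → ℂ) (hψm : Measurable ψ)
    (hψ : MemLp ψ 2 (volume.restrict Ω₁)) :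
    MemLp (fun w => ∑ k, (jacDet f (g k w))⁻¹ * ψ (g k w)) 2 (volume.restrict Ω₂) ∧
      ∫ w in Ω₂, ‖∑ k, (jacDet f (g k w))⁻¹ * ψ (g k w)‖ ^ 2
        ≤ m * ∫ z in Ω₁, ‖ψ z‖ ^ 2 :=
  proper_map_symmetrization_L2_general Ω₁ Ω₂ hΩ₁o hΩ₂o f hf E hfE0 hjac g hgm hg ψ hψm hψ
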